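/- arXiv:1303.4609 — 2 statements merged into one kernel-verified Lean document; each statement's English description precedes it below -/
import Mathlib

section
/- Let m and s be integers with 1 ≤ s ≤ m − 1. Then the function H_s is integrable on the punctured unit ball {t ∈ ℝ^m : 0 < ‖t‖ < 1} with respect to Lebesgue measure. -/
open MeasureTheory

/-- The kernel `H_s(t) = (∏_{i=1}^s (|t_i| + ‖t‖²))⁻¹ · ‖t‖^{-(m-s-1)}` on `ℝ^m`. -/
noncomputable def Hker (m s : ℕ) (t : EuclideanSpace ℝ (Fin m)) : ℝ :=
  ((∏ i ∈ Finset.univ.filter (fun i : Fin m => (i : ℕ) < s), (|t i| + ‖t‖ ^ 2)) *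
    ‖t‖ ^ (m - s - 1))⁻¹

/-!
Weighted AM–GM gives `(|tᵢ| + ‖t‖²)⁻¹ ≤ |tᵢ|^(-a) ‖t‖^(-2(1-a))` for each of the first `s`
coordinates, and `‖t‖ ≥ |tⱼ|` spreads the remaining negative power of `‖t‖` evenly over the last
`m - s` coordinates. With `a = 1 - 1/(2(s+1))` every coordinate receives an exponent `> -1`, so on
the unit cube `H_s` is dominated by a product of integrable one-variable functions `|tᵢ|^(-αᵢ)`.
-/

open Real Set Finset

lemma Real.rpow_mul_rpow_one_sub_le_add {x y a : ℝ} (hx : 0 ≤ x) (hy : 0 ≤ y) (ha₀ : 0 ≤ a)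
    (ha₁ : a ≤ 1) : x ^ a * y ^ (1 - a) ≤ x + y := by
  have := geom_mean_le_arith_mean2_weighted ha₀ (sub_nonneg.2 ha₁) hx hy (by ring)
  nlinarith [mul_nonneg (sub_nonneg.2 ha₁) hx, mul_nonneg ha₀ hy]

lemma Real.prod_rpow_mul_rpow_le_prod_add {ι : Type*} (A : Finset ι) {x : ι → ℝ}
    (hx : ∀ i, 0 ≤ x i) {y a : ℝ} (hy : 0 ≤ y) (ha₀ : 0 ≤ a) (ha₁ : a ≤ 1) :
    (∏ i ∈ A, x i ^ a) * y ^ ((1 - a) * #A) ≤ ∏ i ∈ A, (x i + y) := by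
  rw [rpow_mul_natCast hy, ← prod_const, ← prod_mul_distrib]
  exact prod_le_prod (fun i _ => mul_nonneg (rpow_nonneg (hx i) _) (rpow_nonneg hy _))
    fun i _ => rpow_mul_rpow_one_sub_le_add (hx i) hy ha₀ ha₁

lemma EuclideanSpace.prod_abs_rpow_le_norm_rpow {ι : Type*} [Fintype ι]
    (t : EuclideanSpace ℝ ι) (B : Finset ι) {b : ℝ} (hb : 0 ≤ b) :
    ∏ i ∈ B, |t i| ^ b ≤ ‖t‖ ^ (b * #B) := by
  rw [rpow_mul_natCast (norm_nonneg t), ← prod_const]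
  exact prod_le_prod (fun i _ => by positivity) fun i _ =>
    rpow_le_rpow (abs_nonneg _) (by simpa using PiLp.norm_apply_le t i) hb

lemma Hker_nonneg (m s : ℕ) (t : EuclideanSpace ℝ (Fin m)) : 0 ≤ Hker m s t := by
  unfold Hker; positivity

lemma measurable_Hker (m s : ℕ) : Measurable (Hker m s) := by
  unfold Hker; fun_prop

lemma integrableOn_Ioo_abs_rpow_neg {α : ℝ} (hα : α < 1) :
    IntegrableOn (fun x : ℝ => |x| ^ (-α)) (Ioo (-1) 1) := by
  rw [← Real.ball_zero_eq_Ioo]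
  refine integrableOn_ball_of_norm_le_rpow (C := 1) (by simp) (by simpa using hα)
    (Filter.Eventually.of_forall fun x => ?_)
    (by fun_prop : Measurable fun x : ℝ => |x| ^ (-α)).aestronglyMeasurable
  simp [abs_of_nonneg (rpow_nonneg (abs_nonneg x) _)]

lemma EuclideanSpace.integrableOn_cube_prod_abs_rpow_neg {ι : Type*} [Fintype ι] {α : ι → ℝ}
    (hα : ∀ i, α i < 1) :
    IntegrableOn (fun t : EuclideanSpace ℝ ι => ∏ i, |t i| ^ (-α i))
      {t | ∀ i, |t i| < 1} := by
  have hpi : IntegrableOn (fun x : ι → ℝ => ∏ i, |x i| ^ (-α i))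
      (Set.univ.pi fun _ => Ioo (-1) 1) := by
    rw [IntegrableOn, volume_pi, Measure.restrict_pi_pi]
    exact Integrable.fintype_prod fun i => integrableOn_Ioo_abs_rpow_neg (hα i)
  have := ((PiLp.volume_preserving_ofLp ι).integrableOn_comp_preimage
    (MeasurableEquiv.toLp 2 (ι → ℝ)).symm.measurableEmbedding).2 hpi
  simpa [Set.preimage, Set.pi, abs_lt, Function.comp_def] using this

lemma EuclideanSpace.ae_forall_apply_ne_zero {ι : Type*} [Fintype ι] :
    ∀ᵐ t : EuclideanSpace ℝ ι, ∀ i, t i ≠ 0 :=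
  (PiLp.volume_preserving_ofLp ι).quasiMeasurePreserving.ae
    (ae_all_iff.2 fun i => Measure.ae_eval_ne _ i 0)

lemma Hker_le_prod_abs_rpow {m s : ℕ} (hsm : s < m) {a b : ℝ} (ha₀ : 0 ≤ a) (ha₁ : a ≤ 1)
    (hb : 0 ≤ b) (hab : 2 * ((1 - a) * s) + (m - s - 1) = b * (m - s))
    {t : EuclideanSpace ℝ (Fin m)} (ht : ∀ i, t i ≠ 0) :
    Hker m s t ≤ ∏ i, |t i| ^ (-if (i : ℕ) < s then a else b) := by
  set head := univ.filter fun i : Fin m => (i : ℕ) < s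
  set tail := univ.filter fun i : Fin m => ¬(i : ℕ) < s
  have hhead : #head = s := by simpa [head, Fin.card_filter_val_lt] using hsm.le
  have htail : #tail = m - s := by
    have : #head + #tail = m := (card_filter_add_card_filter_not _).trans (by simp)
    omega
  have hnorm : 0 < ‖t‖ := norm_pos_iff.2 fun h => ht ⟨0, by omega⟩ (by simp [h])
  have hexp : ‖t‖ ^ (b * #tail) = (‖t‖ ^ 2) ^ ((1 - a) * #head) * ‖t‖ ^ (m - s - 1) := by
    rw [← rpow_natCast_mul hnorm.le, ← rpow_natCast ‖t‖ (m - s - 1), ← rpow_add hnorm, hhead,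
      htail, Nat.cast_sub hsm.le, Nat.sub_sub, Nat.cast_sub hsm]
    push_cast
    congr 1
    linarith
  have hP_le : (∏ i ∈ head, |t i| ^ a) * ∏ i ∈ tail, |t i| ^ b ≤
      (∏ i ∈ head, (|t i| + ‖t‖ ^ 2)) * ‖t‖ ^ (m - s - 1) := calc
    _ ≤ (∏ i ∈ head, |t i| ^ a) * ‖t‖ ^ (b * #tail) := by
        gcongr
        exact EuclideanSpace.prod_abs_rpow_le_norm_rpow t tail hb
    _ = (∏ i ∈ head, |t i| ^ a) * (‖t‖ ^ 2) ^ ((1 - a) * #head) * ‖t‖ ^ (m - s - 1) := by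
        rw [hexp, mul_assoc]
    _ ≤ (∏ i ∈ head, (|t i| + ‖t‖ ^ 2)) * ‖t‖ ^ (m - s - 1) := by
        gcongr
        exact prod_rpow_mul_rpow_le_prod_add head (fun i => abs_nonneg (t i)) (by positivity)
          ha₀ ha₁
  have hP_pos : 0 < (∏ i ∈ head, |t i| ^ a) * ∏ i ∈ tail, |t i| ^ b := by
    apply mul_pos <;> exact prod_pos fun i _ => rpow_pos_of_pos (abs_pos.2 (ht i)) _
  have hprod : ∏ i, |t i| ^ (-if (i : ℕ) < s then a else b) =
      ((∏ i ∈ head, |t i| ^ a) * ∏ i ∈ tail, |t i| ^ b)⁻¹ := by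
    rw [← prod_filter_mul_prod_filter_not univ fun i : Fin m => (i : ℕ) < s, mul_inv,
      ← prod_inv_distrib, ← prod_inv_distrib]
    congr 1 <;> refine prod_congr rfl fun i hi => ?_ <;>
      simp_all [head, tail, rpow_neg (abs_nonneg _)]
  rw [hprod]
  exact inv_anti₀ hP_pos hP_le

lemma exists_Hker_le_prod_abs_rpow {m s : ℕ} (hsm : s < m) :
    ∃ α : Fin m → ℝ, (∀ i, α i < 1) ∧
      ∀ t : EuclideanSpace ℝ (Fin m), (∀ i, t i ≠ 0) → Hker m s t ≤ ∏ i, |t i| ^ (-α i) := by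
  have hms : (1 : ℝ) ≤ m - s := by
    rw [le_sub_iff_add_le']; exact_mod_cast hsm
  have hε : 0 < (2 * ((s : ℝ) + 1))⁻¹ ∧ (2 * ((s : ℝ) + 1))⁻¹ ≤ 1 :=
    ⟨by positivity, inv_le_one_of_one_le₀ (by linarith [s.cast_nonneg (α := ℝ)])⟩
  have hδ : 0 < (((s : ℝ) + 1) * (m - s))⁻¹ ∧ (((s : ℝ) + 1) * (m - s))⁻¹ ≤ 1 :=
    ⟨by positivity, inv_le_one_of_one_le₀
      (one_le_mul_of_one_le_of_one_le (by linarith [s.cast_nonneg (α := ℝ)]) hms)⟩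
  refine ⟨fun i => if (i : ℕ) < s then 1 - (2 * ((s : ℝ) + 1))⁻¹
    else 1 - (((s : ℝ) + 1) * (m - s))⁻¹, fun i => by dsimp only; split_ifs <;> linarith,
    fun t ht => ?_⟩
  refine Hker_le_prod_abs_rpow hsm (by linarith) (by linarith) (by linarith) ?_ ht
  field_simp
  ring

theorem Hker_integrableOn_puncturedBall_general (m s : ℕ) (hsm : s + 1 ≤ m) :
    IntegrableOn (Hker m s)
      {t : EuclideanSpace ℝ (Fin m) | 0 < ‖t‖ ∧ ‖t‖ < 1} volume := by
  obtain ⟨α, hα, hle⟩ := exists_Hker_le_prod_abs_rpow hsm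
  have hdom := (EuclideanSpace.integrableOn_cube_prod_abs_rpow_neg hα).mono_set
    fun t (ht : 0 < ‖t‖ ∧ ‖t‖ < 1) i => (PiLp.norm_apply_le t i).trans_lt ht.2
  refine hdom.mono' (measurable_Hker m s).aestronglyMeasurable.restrict ?_
  filter_upwards [ae_restrict_of_ae EuclideanSpace.ae_forall_apply_ne_zero] with t ht
  rw [norm_of_nonneg (Hker_nonneg m s t)]
  exact hle t ht

/-- For `1 ≤ s ≤ m - 1`, the kernel `H_s` is integrable on the punctured unit ball of `ℝ^m`. -/
theorem Hker_integrableOn_puncturedBall (m s : ℕ) (hs : 1 ≤ s) (hsm : s + 1 ≤ m) :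
    IntegrableOn (Hker m s)
      {t : EuclideanSpace ℝ (Fin m) | 0 < ‖t‖ ∧ ‖t‖ < 1} volume :=
  Hker_integrableOn_puncturedBall_general m s hsm
end

section
/- Let E⁰, E¹, E² be reflexive complex Banach spaces, let S be a closed densely defined linear operator from E⁰ to E¹ and T a closed densely defined linear operator from E¹ to E², such that S(Dom S) ⊆ Dom T and T(S x) = 0 for every x ∈ Dom S. Let S′ (from (E¹)* to (E⁰)*) and T′ (from (E²)* to (E¹)*) be the transposes of S and T. Assume: (a) the range of S′ is a norm-closed subspace of (E⁰)*; and (b) every φ ∈ Dom S′ with S′φ = 0 lies in the range of T′. Then every x ∈ Dom T with T x = 0 lies in the range of S; that is, the complex E⁰ → E¹ → E² is exact at E¹. -/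
/-!
For `y ∈ ker T`, the assignment `S′φ ↦ φ y` is a well-defined linear functional on `range S′`:
if `S′φ = 0` then `φ = T′η`, so `φ y = η (T y) = 0`. The graph of `S′` and `range S′` are both
closed, so the open mapping theorem makes this functional bounded. Hahn–Banach extends it to
`(E⁰)*`, and reflexivity of `E⁰` represents the extension by a point `x`, so that
`(S′φ) x = φ y` for every `φ ∈ Dom S′`. A functional annihilating the graph of `S` has the form
`(-S′φ, φ)`, so it annihilates `(x, y)` as well; since that graph is closed, Hahn–Banach puts
`(x, y)` in it, i.e. `S x = y`.
-/

open MeasureTheory NormedSpace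

namespace ContinuousLinearMap

variable {𝕜 E F : Type*}
  [NormedAddCommGroup E] [NormedAddCommGroup F] [CompleteSpace E] [CompleteSpace F]

theorem exists_comp_eq_of_surjective [NontriviallyNormedField 𝕜]
    [NormedSpace 𝕜 E] [NormedSpace 𝕜 F] {G : Type*} [TopologicalSpace G] [AddCommGroup G]
    [Module 𝕜 G] {f : E →L[𝕜] F} (hf : Function.Surjective f) {g : E →L[𝕜] G}
    (hfg : ∀ x, f x = 0 → g x = 0) : ∃ h : F →L[𝕜] G, h.comp f = g := by
  let h : F →ₗ[𝕜] G := ((f : E →ₗ[𝕜] F).ker.liftQ (g : E →ₗ[𝕜] G) hfg).comp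
    ((f : E →ₗ[𝕜] F).quotKerEquivOfSurjective hf).symm.toLinearMap
  have hcomp : ∀ x, h (f x) = g x := fun x => by
    have hmk := (f : E →ₗ[𝕜] F).quotKerEquivOfSurjective_symm_apply hf x
    simp only [h, LinearMap.comp_apply, LinearEquiv.coe_coe, coe_coe] at hmk ⊢
    rw [hmk]
    rfl
  -- By the open mapping theorem `f` is a quotient map, so `h` is continuous because `h ∘ f` is.
  refine ⟨⟨h, (f.isQuotientMap hf).continuous_iff.2 ?_⟩, ext hcomp⟩
  simpa [Function.comp_def, hcomp] using g.continuous

theorem exists_dual_comp_eq_of_isClosed_range [RCLike 𝕜] [NormedSpace 𝕜 E] [NormedSpace 𝕜 F]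
    (f : E →L[𝕜] F) (hf : IsClosed (Set.range f)) (g : StrongDual 𝕜 E)
    (hfg : ∀ x, f x = 0 → g x = 0) : ∃ Λ : StrongDual 𝕜 F, Λ.comp f = g := by
  have : CompleteSpace (LinearMap.range (f : E →ₗ[𝕜] F)) :=
    IsClosed.completeSpace_coe (hs := by rwa [LinearMap.coe_range, coe_coe])
  obtain ⟨h, hh⟩ := f.rangeRestrict.exists_comp_eq_of_surjective
    (LinearMap.surjective_rangeRestrict _) fun x hx => hfg x congr($hx)
  obtain ⟨Λ, hΛ, -⟩ := exists_extension_norm_eq _ h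
  exact ⟨Λ, by rw [← hh]; ext x; exact hΛ (f.rangeRestrict x)⟩

end ContinuousLinearMap

namespace Submodule

variable {𝕜 : Type*} [RCLike 𝕜]

theorem mem_of_forall_dual_eq_zero {V : Type*} [NormedAddCommGroup V] [NormedSpace 𝕜 V]
    {M : Submodule 𝕜 V} (hM : IsClosed (M : Set V)) {v : V}
    (h : ∀ f : StrongDual 𝕜 V, (∀ m ∈ M, f m = 0) → f v = 0) : v ∈ M := by
  have : IsClosed (M : Set V) := hM
  by_contra hv
  obtain ⟨g, hg⟩ := SeparatingDual.exists_ne_zero (R := 𝕜) (x := M.mkQ v)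
    (by rwa [ne_eq, mkQ_apply, Quotient.mk_eq_zero])
  exact hg (h (g.comp M.mkQL) fun m hm => by simp [(Quotient.mk_eq_zero M).2 hm])

theorem mem_prod_of_forall_dual {E F : Type*} [NormedAddCommGroup E] [NormedSpace 𝕜 E]
    [NormedAddCommGroup F] [NormedSpace 𝕜 F] {M : Submodule 𝕜 (E × F)}
    (hM : IsClosed (M : Set (E × F))) {x : E} {y : F}
    (h : ∀ (ψ : StrongDual 𝕜 E) (φ : StrongDual 𝕜 F), (∀ p ∈ M, ψ p.1 + φ p.2 = 0) →
      ψ x + φ y = 0) : (x, y) ∈ M := by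
  refine mem_of_forall_dual_eq_zero hM fun f hf => ?_
  have hsplit : ∀ p : E × F, f p = f.comp (.inl 𝕜 E F) p.1 + f.comp (.inr 𝕜 E F) p.2 :=
    fun p => by simp [← map_add]
  rw [hsplit]
  exact h _ _ fun p hp => (hsplit p).symm.trans (hf p hp)

end Submodule

namespace LinearPMap

theorem isClosed_mk_iff {𝕜 E F : Type*} [CommRing 𝕜] [AddCommGroup E] [Module 𝕜 E]
    [TopologicalSpace E] [AddCommGroup F] [Module 𝕜 F] [TopologicalSpace F]
    {dom : Submodule 𝕜 E} {f : dom →ₗ[𝕜] F} :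
    (⟨dom, f⟩ : E →ₗ.[𝕜] F).IsClosed ↔
      _root_.IsClosed {q : E × F | ∃ hx : q.1 ∈ dom, f ⟨q.1, hx⟩ = q.2} := by
  rw [LinearPMap.IsClosed]
  congr! 2
  ext q
  simp [eq_comm]

variable {𝕜 E F : Type*} [NontriviallyNormedField 𝕜] [NormedAddCommGroup E] [NormedSpace 𝕜 E]
  [NormedAddCommGroup F] [NormedSpace 𝕜 F]

/-- The graph of the transpose `f′ : F* → E*`; without density of `f.domain` it is only a linear
relation. -/
def transposeGraph (f : E →ₗ.[𝕜] F) : Submodule 𝕜 (StrongDual 𝕜 F × StrongDual 𝕜 E) where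
  carrier := {p | ∀ x : f.domain, p.1 (f x) = p.2 x}
  add_mem' hp hq x := by simp [hp x, hq x]
  zero_mem' x := by simp
  smul_mem' c p hp x := by simp [hp x]

theorem isClosed_transposeGraph (f : E →ₗ.[𝕜] F) :
    _root_.IsClosed (f.transposeGraph : Set (StrongDual 𝕜 F × StrongDual 𝕜 E)) := by
  simp only [transposeGraph, Submodule.coe_set_mk, AddSubmonoid.coe_set_mk,
    AddSubsemigroup.coe_set_mk, Set.ofPred_forall]
  exact isClosed_iInter fun x => isClosed_eq (by fun_prop) (by fun_prop)

end LinearPMap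

theorem exactness_of_dual_complex_general
    {E0 E1 E2 : Type*}
    [NormedAddCommGroup E0] [NormedSpace ℂ E0]
    [NormedAddCommGroup E1] [NormedSpace ℂ E1]
    [NormedAddCommGroup E2] [NormedSpace ℂ E2]
    (hrefl0 : Function.Surjective (inclusionInDoubleDual ℂ E0))
    (domS : Submodule ℂ E0) (S : domS →ₗ[ℂ] E1)
    (domT : Submodule ℂ E1) (T : domT →ₗ[ℂ] E2)
    (hSclosed : IsClosed {q : E0 × E1 | ∃ hx : q.1 ∈ domS, S ⟨q.1, hx⟩ = q.2})
    (hrangeS' : IsClosed {ψ : StrongDual ℂ E0 | ∃ φ : StrongDual ℂ E1, ∀ x : domS, φ (S x) = ψ x})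
    (hkerS' : ∀ φ : StrongDual ℂ E1, (∀ x : domS, φ (S x) = 0) →
      ∃ η : StrongDual ℂ E2, ∀ y : domT, η (T y) = φ y) :
    ∀ y : domT, T y = 0 → ∃ x : domS, S x = (y : E1) := by
  intro y hy
  let S' : E0 →ₗ.[ℂ] E1 := ⟨domS, S⟩
  let G := S'.transposeGraph
  have : CompleteSpace G := S'.isClosed_transposeGraph.completeSpace_coe
  let π₂ : G →L[ℂ] StrongDual ℂ E0 := (ContinuousLinearMap.snd ℂ _ _).comp G.subtypeL
  let evy : StrongDual ℂ G :=
    inclusionInDoubleDual ℂ E1 y ∘L (ContinuousLinearMap.fst ℂ _ _).comp G.subtypeL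
  have hrange : IsClosed (Set.range π₂) := by
    convert hrangeS' using 1
    ext ψ
    exact ⟨fun ⟨p, hp⟩ => ⟨p.1.1, hp ▸ p.2⟩, fun ⟨φ, hφ⟩ => ⟨⟨(φ, ψ), hφ⟩, rfl⟩⟩
  have hker : ∀ p, π₂ p = 0 → evy p = 0 := by
    rintro ⟨⟨φ, ψ⟩, hp⟩ (rfl : ψ = 0)
    obtain ⟨η, hη⟩ := hkerS' φ hp
    simp [evy, ← hη y, hy]
  obtain ⟨Λ, hΛ⟩ := ContinuousLinearMap.exists_dual_comp_eq_of_isClosed_range (𝕜 := ℂ) (E := G)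
    (F := StrongDual ℂ E0) π₂ hrange evy hker
  obtain ⟨x, rfl⟩ := hrefl0 Λ
  have hdual : ∀ p ∈ G, p.2 x = p.1 y := fun p hp => congr($hΛ ⟨p, hp⟩)
  have hxy : (x, (y : E1)) ∈ S'.graph := by
    refine Submodule.mem_prod_of_forall_dual (LinearPMap.isClosed_mk_iff.2 hSclosed) fun ψ φ h => ?_
    have hφψ := hdual (φ, -ψ) fun u => by
      simpa [eq_neg_iff_add_eq_zero, add_comm] using h _ (S'.mem_graph u)
    simp [← hφψ]
  obtain ⟨u, -, hu⟩ := S'.mem_graph_iff.1 hxy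
  exact ⟨u, hu⟩

/-- Abstract duality for a complex of closed densely defined operators between reflexive
Banach spaces `E⁰ →(S) E¹ →(T) E²` with `T ∘ S = 0`.  If the range of the transpose `S′` is
norm-closed in `(E⁰)*` and every `φ ∈ Dom S′` with `S′φ = 0` lies in the range of the transpose
`T′`, then every `x ∈ Dom T` with `T x = 0` lies in the range of `S` (exactness at `E¹`).
Membership of `ψ` in the range of `S′` is expressed by `∃ φ, ∀ x ∈ Dom S, φ (S x) = ψ x`, and
`φ ∈ Dom S′` with `S′φ = 0` by `∀ x ∈ Dom S, φ (S x) = 0` (this is equivalent since `Dom S`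
is dense). -/
theorem exactness_of_dual_complex
    {E0 E1 E2 : Type*}
    [NormedAddCommGroup E0] [NormedSpace ℂ E0] [CompleteSpace E0]
    [NormedAddCommGroup E1] [NormedSpace ℂ E1] [CompleteSpace E1]
    [NormedAddCommGroup E2] [NormedSpace ℂ E2] [CompleteSpace E2]
    (hrefl0 : Function.Surjective (inclusionInDoubleDual ℂ E0))
    (hrefl1 : Function.Surjective (inclusionInDoubleDual ℂ E1))
    (hrefl2 : Function.Surjective (inclusionInDoubleDual ℂ E2))
    (domS : Submodule ℂ E0) (S : domS →ₗ[ℂ] E1)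
    (domT : Submodule ℂ E1) (T : domT →ₗ[ℂ] E2)
    (hdomS : Dense (domS : Set E0)) (hdomT : Dense (domT : Set E1))
    (hSclosed : IsClosed {q : E0 × E1 | ∃ hx : q.1 ∈ domS, S ⟨q.1, hx⟩ = q.2})
    (hTclosed : IsClosed {q : E1 × E2 | ∃ hx : q.1 ∈ domT, T ⟨q.1, hx⟩ = q.2})
    (hST : ∀ x : domS, ∃ hx : (S x) ∈ domT, T ⟨S x, hx⟩ = 0)
    (hrangeS' : IsClosed {ψ : StrongDual ℂ E0 | ∃ φ : StrongDual ℂ E1, ∀ x : domS, φ (S x) = ψ x})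
    (hkerS' : ∀ φ : StrongDual ℂ E1, (∀ x : domS, φ (S x) = 0) →
      ∃ η : StrongDual ℂ E2, ∀ y : domT, η (T y) = φ y) :
    ∀ y : domT, T y = 0 → ∃ x : domS, S x = (y : E1) :=
  exactness_of_dual_complex_general hrefl0 domS S domT T hSclosed hrangeS' hkerS'
end
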